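/- Let ν = Σ_{n∈ℕ} w_n ν_n with w_n = (6/π²)n^{−2}, where each ν_n is a probability measure on X^∞. Suppose for each n there is a set S_n ⊆ X^n and a constant c_n > 0 with −log c_n = o(n), such that ν_n(x_{1..n}) ≥ c_n ρ(x_{1..n}) for all x_{1..n} ∈ S_n, and μ(X^n \ S_n) → 0. If additionally d_n(μ,ρ) = o(n) and ν(x_{1..n}) ≥ w'_n |X|^{−n} for all x_{1..n} with μ(x_{1..n}) > 0, where −log w'_n = o(n), then d_n(μ,ν) = o(n). -/

import Mathlib

open MeasureTheory Filter Set
open scoped ENNReal Topology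

/-- The cylinder set `[x_{1..n}]` of all infinite sequences over `X` starting with the word `s`. -/
def cylSet {X : Type*} [MeasurableSpace X] {n : ℕ} (s : Fin n → X) : Set (ℕ → X) :=
  {ω | ∀ i : Fin n, ω (i : ℕ) = s i}

/-- The probability `μ(x_{1..n})` of the word `s` (cylinder probability), as a real number. -/
noncomputable def cylP {X : Type*} [MeasurableSpace X] (μ : Measure (ℕ → X)) {n : ℕ}
    (s : Fin n → X) : ℝ :=
  (μ (cylSet s)).toReal

open scoped Classical in
/-- The `n`-step Kullback-Leibler divergence `d_n(μ,ρ)` between the restrictions of `μ` and `ρ`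
to the first `n` observations, with the convention that terms with `μ(x_{1..n}) = 0` vanish. -/
noncomputable def klDn {X : Type*} [Fintype X] [MeasurableSpace X]
    (μ ρ : Measure (ℕ → X)) (n : ℕ) : ℝ :=
  ∑ s : Fin n → X, if cylP μ s = 0 then 0 else cylP μ s * Real.log (cylP μ s / cylP ρ s)

/-!
On the words of `S_n` the mixture dominates `w_n c_n ρ`, so there the summands of `d_n(μ,ν)` exceed
those of `d_n(μ,ρ)` by at most `μ(x_{1..n}) |log (w_n c_n)|`, and `log w_n = O(log n)`. On the
other words `ν ≥ w'_n |X|^{-n}` bounds each summand by `μ(x_{1..n}) (n log |X| - log w'_n)`, which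
is `O(n)` times a mass that tends to `0`. Since every summand `p log (p/q)` is at least `p - q`,
restricting the sum `d_n(μ,ρ)` to `S_n` increases it by at most `ρ(X^n \ S_n) ≤ 1`, and
`d_n(μ,ν) ≥ 1 - ν(X^∞)` is bounded below.
-/

noncomputable def klTerm (p q : ℝ) : ℝ :=
  if p = 0 then 0 else p * Real.log (p / q)

section klTerm

variable {p q r a : ℝ}

lemma sub_le_klTerm (hq : 0 ≤ q) (hpq : 0 < p → 0 < q) (hp : 0 ≤ p) : p - q ≤ klTerm p q := by
  rcases hp.eq_or_lt with rfl | hp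
  · simpa [klTerm] using hq
  have hlog : 1 - q / p ≤ Real.log (p / q) := by
    simpa only [inv_div] using Real.one_sub_inv_le_log_of_pos (div_pos hp (hpq hp))
  calc p - q = p * (1 - q / p) := by field_simp
    _ ≤ klTerm p q := by rw [klTerm, if_neg hp.ne']; gcongr

lemma klTerm_le_sub_mul_log (ha : 0 < a) (hpr : 0 < p → 0 < r) (hq : 0 < p → a * r ≤ q)
    (hp : 0 ≤ p) : klTerm p q ≤ klTerm p r - p * Real.log a := by
  rcases hp.eq_or_lt with rfl | hp
  · simp [klTerm]
  have hr := hpr hp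
  replace hq := hq hp
  have hq0 : 0 < q := (mul_pos ha hr).trans_le hq
  have hlog : Real.log (p / q) ≤ Real.log (p / r) - Real.log a := by
    rw [← Real.log_div (div_pos hp hr).ne' ha.ne', div_div, mul_comm r]
    exact Real.log_le_log (by positivity) (div_le_div_of_nonneg_left hp.le (by positivity) hq)
  simp only [klTerm, if_neg hp.ne']
  nlinarith

lemma klTerm_one_nonpos (hp0 : 0 ≤ p) (hp1 : p ≤ 1) : klTerm p 1 ≤ 0 := by
  unfold klTerm
  split_ifs
  · rfl
  · rw [div_one]; exact mul_nonpos_of_nonneg_of_nonpos hp0 (Real.log_nonpos hp0 hp1)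

end klTerm

section sum_klTerm

variable {ι : Type*} {p q r : ι → ℝ} {a b : ℝ}

lemma sum_klTerm_le_sub_mul_log (T : Finset ι) (hp : ∀ i, 0 ≤ p i) (ha : 0 < a)
    (hpr : ∀ i, 0 < p i → 0 < r i) (hq : ∀ i ∈ T, 0 < p i → a * r i ≤ q i) :
    ∑ i ∈ T, klTerm (p i) (q i) ≤ ∑ i ∈ T, klTerm (p i) (r i) - (∑ i ∈ T, p i) * Real.log a := by
  rw [Finset.sum_mul, ← Finset.sum_sub_distrib]
  exact Finset.sum_le_sum fun i hi => klTerm_le_sub_mul_log ha (hpr i) (hq i hi) (hp i)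

variable [Fintype ι]

lemma sum_sub_sum_le_sum_klTerm (hp : ∀ i, 0 ≤ p i) (hq : ∀ i, 0 ≤ q i)
    (hpq : ∀ i, 0 < p i → 0 < q i) : ∑ i, p i - ∑ i, q i ≤ ∑ i, klTerm (p i) (q i) := by
  rw [← Finset.sum_sub_distrib]
  exact Finset.sum_le_sum fun i _ => sub_le_klTerm (hq i) (hpq i) (hp i)

lemma sum_klTerm_le_of_split [DecidableEq ι] (S : Finset ι) (hp : ∀ i, 0 ≤ p i)
    (hp1 : ∑ i, p i ≤ 1) (hr : ∀ i, 0 ≤ r i) (hr1 : ∑ i, r i ≤ 1) (hpr : ∀ i, 0 < p i → 0 < r i)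
    (ha : 0 < a) (hqS : ∀ i ∈ S, a * r i ≤ q i) (hb : 0 < b) (hqb : ∀ i, 0 < p i → b ≤ q i) :
    ∑ i, klTerm (p i) (q i) ≤
      ∑ i, klTerm (p i) (r i) + 1 + |Real.log a| + -Real.log b * ∑ i ∈ Finset.univ \ S, p i := by
  have hsplit (f : ι → ℝ) : ∑ i, f i = ∑ i ∈ S, f i + ∑ i ∈ Finset.univ \ S, f i := by
    rw [← Finset.sum_sdiff S.subset_univ, add_comm]
  have hpS : 0 ≤ ∑ i ∈ S, p i := Finset.sum_nonneg fun i _ => hp i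
  have hpS1 : ∑ i ∈ S, p i ≤ 1 :=
    (Finset.sum_le_sum_of_subset_of_nonneg S.subset_univ fun i _ _ => hp i).trans hp1
  have hrT1 : ∑ i ∈ Finset.univ \ S, r i ≤ 1 :=
    (Finset.sum_le_sum_of_subset_of_nonneg Finset.sdiff_subset fun i _ _ => hr i).trans hr1
  have on_S := sum_klTerm_le_sub_mul_log S hp ha hpr fun i hi _ => hqS i hi
  have on_compl := sum_klTerm_le_sub_mul_log (r := fun _ => 1) (Finset.univ \ S) hp hb
    (fun _ _ => one_pos) (fun i _ => by simpa using hqb i)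
  have hpT1 : ∀ i, p i ≤ 1 := fun i =>
    (Finset.single_le_sum (fun j _ => hp j) (Finset.mem_univ i)).trans hp1
  have hcompl_one : ∑ i ∈ Finset.univ \ S, klTerm (p i) 1 ≤ 0 :=
    Finset.sum_nonpos fun i _ => klTerm_one_nonpos (hp i) (hpT1 i)
  have hdrop : -1 ≤ ∑ i ∈ Finset.univ \ S, klTerm (p i) (r i) := by
    have := Finset.sum_le_sum fun i (_ : i ∈ Finset.univ \ S) =>
      sub_le_klTerm (hr i) (hpr i) (hp i)
    rw [Finset.sum_sub_distrib] at this
    linarith [Finset.sum_nonneg fun i (_ : i ∈ Finset.univ \ S) => hp i]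
  have hlog_a : -(∑ i ∈ S, p i) * Real.log a ≤ |Real.log a| := by
    nlinarith [neg_abs_le (Real.log a), le_abs_self (Real.log a)]
  rw [hsplit fun i => klTerm (p i) (q i), hsplit fun i => klTerm (p i) (r i)]
  linarith

end sum_klTerm

section cylinders

variable {X : Type*} [MeasurableSpace X] {n : ℕ}

lemma measurableSet_cylSet [MeasurableSingletonClass X] (s : Fin n → X) :
    MeasurableSet (cylSet s) := by
  have : cylSet s = ⋂ i : Fin n, (fun ω : ℕ → X => ω i) ⁻¹' {s i} := by
    ext ω; simp [cylSet]
  rw [this]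
  exact .iInter fun i => measurable_pi_apply _ (measurableSet_singleton _)

lemma pairwise_disjoint_cylSet :
    Pairwise (Function.onFun Disjoint fun s : Fin n → X => cylSet s) :=
  fun _ _ hst => Set.disjoint_left.2 fun _ hs ht => hst (funext fun i => (hs i).symm.trans (ht i))

lemma iUnion_cylSet : ⋃ s : Fin n → X, cylSet s = univ :=
  eq_univ_of_forall fun ω => mem_iUnion.2 ⟨fun i => ω i, fun _ => rfl⟩

lemma sum_cylP [Fintype X] [MeasurableSingletonClass X] (κ : Measure (ℕ → X))
    [IsFiniteMeasure κ] :
    ∑ s : Fin n → X, cylP κ s = κ.real univ := by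
  rw [← iUnion_cylSet (n := n),
    measureReal_iUnion_fintype pairwise_disjoint_cylSet measurableSet_cylSet]
  rfl

lemma cylP_nonneg (κ : Measure (ℕ → X)) (s : Fin n → X) : 0 ≤ cylP κ s :=
  ENNReal.toReal_nonneg

lemma klDn_eq_sum_klTerm [Fintype X] (μ ν : Measure (ℕ → X)) :
    klDn μ ν n = ∑ s : Fin n → X, klTerm (cylP μ s) (cylP ν s) :=
  rfl

lemma one_sub_measureReal_univ_le_klDn [Fintype X] [MeasurableSingletonClass X]
    (μ ν : Measure (ℕ → X)) [IsProbabilityMeasure μ] [IsFiniteMeasure ν]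
    (hν : ∀ s : Fin n → X, 0 < cylP μ s → 0 < cylP ν s) : 1 - ν.real univ ≤ klDn μ ν n := by
  rw [klDn_eq_sum_klTerm]
  have := sum_sub_sum_le_sum_klTerm (cylP_nonneg μ) (cylP_nonneg ν) hν
  rwa [sum_cylP, sum_cylP, probReal_univ] at this

lemma klDn_le_of_split [Fintype X] [MeasurableSingletonClass X] [DecidableEq (Fin n → X)]
    (μ ρ ν : Measure (ℕ → X)) [IsProbabilityMeasure μ] [IsProbabilityMeasure ρ]
    (hμρ : ∀ s : Fin n → X, cylP ρ s = 0 → cylP μ s = 0) (S : Finset (Fin n → X)) {a b : ℝ}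
    (ha : 0 < a) (hS : ∀ s ∈ S, a * cylP ρ s ≤ cylP ν s)
    (hb : 0 < b) (hν : ∀ s : Fin n → X, 0 < cylP μ s → b ≤ cylP ν s) :
    klDn μ ν n ≤ klDn μ ρ n + 1 + |Real.log a| +
      -Real.log b * ∑ s ∈ Finset.univ \ S, cylP μ s := by
  rw [klDn_eq_sum_klTerm, klDn_eq_sum_klTerm]
  exact sum_klTerm_le_of_split S (cylP_nonneg μ) (by rw [sum_cylP, probReal_univ])
    (cylP_nonneg ρ) (by rw [sum_cylP, probReal_univ])
    (fun s hs => (cylP_nonneg ρ s).lt_of_ne fun h => hs.ne' (hμρ s h.symm)) ha hS hb hν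

end cylinders

section mixture

variable {ι α : Type*} [MeasurableSpace α] {w : ι → ℝ} {κ : ι → Measure α}
  [∀ i, IsProbabilityMeasure (κ i)]

lemma isFiniteMeasure_sum_ofReal_smul (hw : ∀ i, 0 ≤ w i) (hsum : Summable w) :
    IsFiniteMeasure (Measure.sum fun i => ENNReal.ofReal (w i) • κ i) := by
  constructor
  simp [Measure.sum_apply _ MeasurableSet.univ, ← ENNReal.ofReal_tsum_of_nonneg hw hsum]

lemma mul_measureReal_le_sum_ofReal_smul (hw : ∀ i, 0 ≤ w i) (hsum : Summable w) (i : ι)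
    (A : Set α) :
    w i * (κ i).real A ≤ (Measure.sum fun i => ENNReal.ofReal (w i) • κ i).real A := by
  have := isFiniteMeasure_sum_ofReal_smul (κ := κ) hw hsum
  rw [← ENNReal.toReal_ofReal (hw i), ← measureReal_ennreal_smul_apply]
  exact ENNReal.toReal_mono (measure_ne_top _ _) (Measure.le_sum (fun i => _ • κ i) i A)

end mixture

lemma tendsto_log_const_mul_inv_sq_div {C : ℝ} (hC : 0 < C) :
    Tendsto (fun n : ℕ => Real.log (C * ((n : ℝ) ^ 2)⁻¹) / n) atTop (𝓝 0) := by
  have hlog : Tendsto (fun n : ℕ => Real.log n / n) atTop (𝓝 0) :=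
    Real.isLittleO_log_id_atTop.tendsto_div_nhds_zero.comp tendsto_natCast_atTop_atTop
  have := (tendsto_const_div_atTop_nhds_zero_nat (Real.log C)).sub (hlog.const_mul 2)
  rw [mul_zero, sub_zero] at this
  refine this.congr' ?_
  filter_upwards [eventually_ge_atTop 1] with n hn
  have hn : (n : ℝ) ≠ 0 := by positivity
  rw [Real.log_mul hC.ne' (by positivity), Real.log_inv, Real.log_pow]
  push_cast
  ring

lemma tendsto_log_mul_div {u v : ℕ → ℝ} (hu : ∀ᶠ n in atTop, u n ≠ 0)
    (hv : ∀ᶠ n in atTop, v n ≠ 0)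
    (hu' : Tendsto (fun n => Real.log (u n) / n) atTop (𝓝 0))
    (hv' : Tendsto (fun n => Real.log (v n) / n) atTop (𝓝 0)) :
    Tendsto (fun n => Real.log (u n * v n) / n) atTop (𝓝 0) := by
  rw [← add_zero (0 : ℝ)]
  refine (hu'.add hv').congr' ?_
  filter_upwards [hu, hv] with n hun hvn
  rw [Real.log_mul hun hvn, add_div]

lemma tendsto_neg_log_mul_inv_pow_div {u : ℕ → ℝ} (hu : ∀ n, 0 < u n)
    (hu' : Tendsto (fun n => -Real.log (u n) / n) atTop (𝓝 0)) {k : ℝ} (hk : 0 < k) :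
    Tendsto (fun n => -Real.log (u n * (k ^ n)⁻¹) / n) atTop (𝓝 (Real.log k)) := by
  rw [← zero_add (Real.log k)]
  refine (hu'.add_const _).congr' ?_
  filter_upwards [eventually_ge_atTop 1] with n hn
  have hn : (n : ℝ) ≠ 0 := by positivity
  rw [Real.log_mul (hu n).ne' (by positivity), Real.log_inv, Real.log_pow]
  field_simp
  ring

lemma tendsto_split_bound_div {d α β ε : ℕ → ℝ} {L : ℝ}
    (hd : Tendsto (fun n => d n / n) atTop (𝓝 0)) (hα : Tendsto (fun n => α n / n) atTop (𝓝 0))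
    (hβ : Tendsto (fun n => β n / n) atTop (𝓝 L)) (hε : Tendsto ε atTop (𝓝 0)) :
    Tendsto (fun n => (d n + 1 + |α n| + β n * ε n) / n) atTop (𝓝 0) := by
  have := ((hd.add tendsto_one_div_atTop_nhds_zero_nat).add hα.abs).add (hβ.mul hε)
  simp only [add_zero, abs_zero, mul_zero] at this
  refine this.congr fun n => ?_
  rw [abs_div, Nat.abs_cast]
  ring

open scoped Classical in
/-- Steps (14)–(17) of the proof of Theorem 2: if `ν = Σ_n w_n ν_n` with `w_n = (6/π²)n⁻²`,
each `ν_n` lower-bounds `c_n ρ` on a set `S_n ⊆ X^n` with `−log c_n = o(n)` and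
`μ(X^n \ S_n) → 0`, `d_n(μ,ρ) = o(n)`, and `ν(x_{1..n}) ≥ w'_n |X|^{−n}` for `μ`-positive
words with `−log w'_n = o(n)`, then `d_n(μ,ν) = o(n)`. -/
theorem mixture_predicts_of_bounds {X : Type*} [Fintype X] [MeasurableSpace X]
    [MeasurableSingletonClass X] (μ ρ : Measure (ℕ → X))
    [IsProbabilityMeasure μ] [IsProbabilityMeasure ρ]
    (νf : ℕ → Measure (ℕ → X)) (hνf : ∀ n, IsProbabilityMeasure (νf n))
    (ν : Measure (ℕ → X))
    (hν : ν = Measure.sum fun n : ℕ =>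
      ENNReal.ofReal (6 / Real.pi ^ 2 * ((n : ℝ) ^ 2)⁻¹) • νf n)
    (S : (n : ℕ) → Finset (Fin n → X))
    (c : ℕ → ℝ) (hc : ∀ n, 0 < c n)
    (hco : Tendsto (fun n => -Real.log (c n) / n) atTop (𝓝 0))
    (hlow : ∀ n, ∀ s ∈ S n, c n * cylP ρ s ≤ cylP (νf n) s)
    (hSμ : Tendsto (fun n => ∑ s ∈ Finset.univ \ S n, cylP μ s) atTop (𝓝 0))
    (hac : ∀ (n : ℕ) (s : Fin n → X), cylP ρ s = 0 → cylP μ s = 0)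
    (hd : Tendsto (fun n => klDn μ ρ n / n) atTop (𝓝 0))
    (w' : ℕ → ℝ) (hw' : ∀ n, 0 < w' n)
    (hw'o : Tendsto (fun n => -Real.log (w' n) / n) atTop (𝓝 0))
    (hνlow : ∀ (n : ℕ) (s : Fin n → X), 0 < cylP μ s →
      w' n * ((Fintype.card X : ℝ) ^ n)⁻¹ ≤ cylP ν s) :
    Tendsto (fun n => klDn μ ν n / n) atTop (𝓝 0) := by
  have : Nonempty X := (nonempty_of_isProbabilityMeasure μ).map (· 0)
  have hcard : (0 : ℝ) < Fintype.card X := by exact_mod_cast Fintype.card_pos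
  set w : ℕ → ℝ := fun n => 6 / Real.pi ^ 2 * ((n : ℝ) ^ 2)⁻¹
  replace hν : ν = Measure.sum fun n => ENNReal.ofReal (w n) • νf n := hν
  have hw (n : ℕ) : 0 ≤ w n := by positivity
  have hw_pos : ∀ᶠ n in atTop, 0 < w n := (eventually_ge_atTop 1).mono fun n hn =>
    mul_pos (by positivity) (inv_pos.2 (pow_pos (Nat.cast_pos.2 hn) 2))
  have hsum : Summable w := (Real.summable_nat_pow_inv.2 one_lt_two).mul_left _
  have := hνf
  have : IsFiniteMeasure ν := hν ▸ isFiniteMeasure_sum_ofReal_smul hw hsum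
  have hupper : ∀ᶠ n in atTop, klDn μ ν n ≤ klDn μ ρ n + 1 + |Real.log (w n * c n)| +
      -Real.log (w' n * ((Fintype.card X : ℝ) ^ n)⁻¹) * ∑ s ∈ Finset.univ \ S n, cylP μ s := by
    filter_upwards [hw_pos] with n hwn
    refine klDn_le_of_split μ ρ ν (hac n) (S n) (mul_pos hwn (hc n)) (fun s hs => ?_)
      (mul_pos (hw' n) (by positivity)) (hνlow n)
    rw [mul_assoc, hν]
    exact (mul_le_mul_of_nonneg_left (hlow n s hs) hwn.le).trans
      (mul_measureReal_le_sum_ofReal_smul hw hsum n (cylSet s))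
  have hlog_wc := tendsto_log_mul_div (hw_pos.mono fun n h => h.ne')
    (.of_forall fun n => (hc n).ne') (tendsto_log_const_mul_inv_sq_div (by positivity))
    (by simpa [neg_div] using hco.neg)
  refine tendsto_of_tendsto_of_tendsto_of_le_of_le'
    (tendsto_const_div_atTop_nhds_zero_nat (1 - ν.real univ))
    (tendsto_split_bound_div hd hlog_wc (tendsto_neg_log_mul_inv_pow_div hw' hw'o hcard) hSμ)
    ?_ ?_
  · refine .of_forall fun n => div_le_div_of_nonneg_right ?_ n.cast_nonneg
    exact one_sub_measureReal_univ_le_klDn μ ν fun s hs =>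
      (mul_pos (hw' n) (by positivity)).trans_le (hνlow n s hs)
  · filter_upwards [hupper] with n hn
    exact div_le_div_of_nonneg_right hn n.cast_nonneg
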